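/- Theorem (tightness of Perturbed GDA for optimization stationarity). Let ε ∈ (0,1) and ℓ, D_Y, r_y > 0, and consider the hard OS instance. Run Perturbed GDA on f̃(x,y) = f(x,y) − (r_y/2)y² with step sizes α, c > 0 satisfying ℓc < 1, initialized at x_0 := ((3D_Y + 2)/(ℓ·D_Y))·ε and y_0 := D_Y, and assume x_0 ≤ 1. Then for every T ∈ ℕ, if x_T is an ε-optimization-stationary point of min_{x∈ℝ} max_{y∈[0,D_Y]} f(x,y), then (1 − ℓ·c·D_Y/(D_Y + 1))^T ≤ 1/2. -/

import Mathlib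

/-!
Since `y_t` stays in `[0, D_Y]` and `x_t` stays in the quadratic piece `(0, 1]` of `h`, the
`x`-update is `x_{t+1} = (1 - ℓ c y_t / (D_Y + 1)) x_t`, so `x_T ≥ q^T x_0` with
`q = 1 - ℓ c D_Y / (D_Y + 1)`. On the other hand `Φ = D_Y · h`, and for `0 < x ≤ 1` every
minimizer of `Φ(z) + ℓ (z - x)²` lies at or below the minimizer `2 (D_Y + 1) x / (3 D_Y + 2)`
of the quadratic piece, at distance `D_Y x / (3 D_Y + 2)` from `x`. Hence an `ε`-OS point in
`(0, 1]` satisfies `x ≤ x_0 / 2`, and `q^T x_0 ≤ x_T ≤ x_0 / 2`.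
-/

noncomputable section

/-- The function `h` of the hard OS instance. -/
def hOS (l Dy : ℝ) (x : ℝ) : ℝ :=
  if |x| ≤ 1 then l / (2 * (Dy + 1)) * x ^ 2
  else if |x| < 2 then l / (Dy + 1) - l / (2 * (Dy + 1)) * (|x| - 2) ^ 2
  else l / (Dy + 1)

/-- The derivative of `hOS` in `x`. -/
def hOS' (l Dy : ℝ) (x : ℝ) : ℝ :=
  if |x| ≤ 1 then l / (Dy + 1) * x
  else if |x| < 2 then -(l / (Dy + 1)) * (|x| - 2) * Real.sign x
  else 0

/-- Metric projection of `v` onto the interval `[0, Dy]`. -/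
def projI (Dy v : ℝ) : ℝ := max 0 (min Dy v)

/-- Value function `Φ(z) = max_{y ∈ [0, Dy]} h(z)·y` of the hard OS instance. -/
def PhiOS (l Dy : ℝ) (z : ℝ) : ℝ :=
  sSup ((fun y => hOS l Dy z * y) '' Set.Icc (0 : ℝ) Dy)

/-- `x` is an `ε`-optimization-stationary point of the hard OS instance:
the minimizer `p` of `Φ(z) + ℓ(z − x)²` over `z ∈ ℝ` satisfies `|p − x| ≤ ε/(2ℓ)`. -/
def IsOS1 (l Dy ε x : ℝ) : Prop :=
  ∃ p : ℝ, (∀ z : ℝ, PhiOS l Dy p + l * (p - x) ^ 2 ≤ PhiOS l Dy z + l * (z - x) ^ 2) ∧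
    |p - x| ≤ ε / (2 * l)

section HardInstance

variable {l Dy : ℝ}

lemma hOS_of_abs_le_one (l Dy : ℝ) {x : ℝ} (hx : |x| ≤ 1) :
    hOS l Dy x = l / (2 * (Dy + 1)) * x ^ 2 := by
  rw [hOS, if_pos hx]

lemma hOS'_of_abs_le_one (l Dy : ℝ) {x : ℝ} (hx : |x| ≤ 1) :
    hOS' l Dy x = l / (Dy + 1) * x := by
  rw [hOS', if_pos hx]

lemma hOS_one_le (hl : 0 ≤ l) (hDy : 0 ≤ Dy) {x : ℝ} (hx : 1 ≤ |x|) :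
    hOS l Dy 1 ≤ hOS l Dy x := by
  have ha : 0 ≤ l / (2 * (Dy + 1)) := by positivity
  have hdouble : l / (Dy + 1) = 2 * (l / (2 * (Dy + 1))) := by field_simp
  rw [hOS_of_abs_le_one l Dy (by norm_num), hOS]
  split_ifs with h1 h2
  · rw [show x ^ 2 = |x| ^ 2 from (sq_abs x).symm, le_antisymm h1 hx]
  · have hsq : (|x| - 2) ^ 2 ≤ 1 := by nlinarith
    nlinarith [mul_le_mul_of_nonneg_left hsq ha]
  · linarith

lemma hOS_nonneg (hl : 0 ≤ l) (hDy : 0 ≤ Dy) (x : ℝ) : 0 ≤ hOS l Dy x := by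
  rcases le_total |x| 1 with hx | hx
  · rw [hOS_of_abs_le_one l Dy hx]; positivity
  · refine le_trans ?_ (hOS_one_le hl hDy hx)
    rw [hOS_of_abs_le_one l Dy (by norm_num)]; positivity

lemma PhiOS_eq (hl : 0 ≤ l) (hDy : 0 ≤ Dy) (z : ℝ) : PhiOS l Dy z = hOS l Dy z * Dy := by
  refine IsGreatest.csSup_eq ⟨⟨Dy, ⟨hDy, le_rfl⟩, rfl⟩, ?_⟩
  rintro _ ⟨y, ⟨-, hy⟩, rfl⟩
  exact mul_le_mul_of_nonneg_left hy (hOS_nonneg hl hDy z)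

lemma projI_mem_Icc (hDy : 0 ≤ Dy) (v : ℝ) : projI Dy v ∈ Set.Icc 0 Dy :=
  ⟨le_max_left _ _, max_le hDy (min_le_left _ _)⟩

end HardInstance

section Prox

variable {l Dy x : ℝ}

/-- On `[-1, 1]` the proximal objective is a quadratic with vertex `w`, and beyond `1` it
is at least its value at `1`. -/
lemma PhiOS_add_sq_lt (hl : 0 < l) (hDy : 0 ≤ Dy) (hx : x ≤ 1) {w : ℝ} (hw0 : 0 ≤ w)
    (hw1 : w < 1) (hwx : (3 * Dy + 2) * w = 2 * x * (Dy + 1)) {z : ℝ} (hwz : w < z) :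
    PhiOS l Dy w + l * (w - x) ^ 2 < PhiOS l Dy z + l * (z - x) ^ 2 := by
  have hquad : ∀ z, w < z → z ≤ 1 →
      hOS l Dy w * Dy + l * (w - x) ^ 2 < hOS l Dy z * Dy + l * (z - x) ^ 2 := by
    intro z hwz hz1
    rw [hOS_of_abs_le_one l Dy (abs_le.mpr ⟨by linarith, hw1.le⟩),
      hOS_of_abs_le_one l Dy (abs_le.mpr ⟨by linarith, hz1⟩)]
    have hgap : l / (2 * (Dy + 1)) * z ^ 2 * Dy + l * (z - x) ^ 2
        - (l / (2 * (Dy + 1)) * w ^ 2 * Dy + l * (w - x) ^ 2)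
        = l * (3 * Dy + 2) / (2 * (Dy + 1)) * (z - w) ^ 2 := by
      field_simp
      linear_combination (2 * (z - w)) * hwx
    have : 0 < l * (3 * Dy + 2) / (2 * (Dy + 1)) * (z - w) ^ 2 :=
      mul_pos (by positivity) (pow_pos (sub_pos.mpr hwz) 2)
    linarith
  rw [PhiOS_eq hl.le hDy, PhiOS_eq hl.le hDy]
  rcases le_or_gt z 1 with hz1 | hz1
  · exact hquad z hwz hz1
  · have hone := hOS_one_le hl.le hDy (x := z) (by rw [abs_of_pos (by linarith)]; exact hz1.le)
    have hsq : (1 - x) ^ 2 ≤ (z - x) ^ 2 := by nlinarith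
    nlinarith [hquad 1 hw1 le_rfl, mul_le_mul_of_nonneg_right hone hDy]

lemma IsOS1.le_of_mem_Ioc (hl : 0 < l) (hDy : 0 < Dy) {ε : ℝ} (hx : x ∈ Set.Ioc 0 1)
    (hOS : IsOS1 l Dy ε x) : x ≤ (3 * Dy + 2) / (l * Dy) * ε / 2 := by
  obtain ⟨p, hmin, hclose⟩ := hOS
  set w := 2 * x * (Dy + 1) / (3 * Dy + 2) with hw
  have hwx : (3 * Dy + 2) * w = 2 * x * (Dy + 1) := by rw [hw]; field_simp
  have hxw : (3 * Dy + 2) * (x - w) = x * Dy := by linear_combination -hwx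
  have hw0 : 0 ≤ w := by rw [hw]; have := hx.1; positivity
  have hwx_lt : w < x := by nlinarith [hx.1]
  have hpw : p ≤ w := by
    by_contra! hwp
    exact (PhiOS_add_sq_lt hl hDy.le hx.2 hw0 (hwx_lt.trans_le hx.2) hwx hwp).not_ge (hmin w)
  have hgap : x - w ≤ ε / (2 * l) := by linarith [(abs_le.mp hclose).1]
  rw [le_div_iff₀ (by positivity)] at hgap
  rw [div_mul_eq_mul_div, div_div, le_div_iff₀ (by positivity)]
  nlinarith

end Prox

section Dynamics

variable {l Dy c : ℝ}

lemma gda_contraction_pos (hl : 0 < l) (hDy : 0 ≤ Dy) (hc : 0 < c) (hlc : l * c < 1) :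
    0 < 1 - l * c * Dy / (Dy + 1) := by
  have : l * c * Dy / (Dy + 1) < 1 := by
    rw [div_lt_one (by linarith)]; nlinarith [mul_pos hl hc]
  linarith

lemma gda_step_bounds (hl : 0 ≤ l) (hDy : 0 ≤ Dy) (hc : 0 ≤ c) {x y : ℝ} (hx : x ∈ Set.Icc 0 1)
    (hy : y ∈ Set.Icc 0 Dy) :
    (1 - l * c * Dy / (Dy + 1)) * x ≤ x - c * (hOS' l Dy x * y) ∧
      x - c * (hOS' l Dy x * y) ≤ x := by
  rw [hOS'_of_abs_le_one l Dy (abs_le.mpr ⟨by linarith [hx.1], hx.2⟩)]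
  have hd : 0 < Dy + 1 := by linarith
  have hcx : 0 ≤ l / (Dy + 1) * c * x := by have := hx.1; positivity
  constructor
  · have := mul_le_mul_of_nonneg_left hy.2 hcx
    have : (1 - l * c * Dy / (Dy + 1)) * x = x - l / (Dy + 1) * c * x * Dy := by ring
    nlinarith
  · nlinarith [mul_nonneg hcx hy.1]

lemma gda_iterate_bounds (hl : 0 < l) (hDy : 0 ≤ Dy) (hc : 0 < c) (hlc : l * c < 1)
    {xs ys : ℕ → ℝ} (hx0 : xs 0 ∈ Set.Ioc 0 1) (hy : ∀ t, ys t ∈ Set.Icc 0 Dy)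
    (hxrec : ∀ t, xs (t + 1) = xs t - c * (hOS' l Dy (xs t) * ys t)) (t : ℕ) :
    xs 0 * (1 - l * c * Dy / (Dy + 1)) ^ t ≤ xs t ∧ xs t ≤ 1 := by
  have hq := gda_contraction_pos hl hDy hc hlc
  induction t with
  | zero => simpa using hx0.2
  | succ n ih =>
    have hxn : 0 ≤ xs n := le_trans (by have := hx0.1; positivity) ih.1
    obtain ⟨hlow, hup⟩ := gda_step_bounds hl.le hDy hc.le ⟨hxn, ih.2⟩ (hy n)
    rw [hxrec n, pow_succ, ← mul_assoc, mul_comm _ (1 - _)]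
    exact ⟨(mul_le_mul_of_nonneg_left ih.1 hq.le).trans hlow, hup.trans ih.2⟩

end Dynamics

theorem perturbed_gda_os_tightness_general
    (l Dy ry ε α c : ℝ) (xs ys : ℕ → ℝ)
    (hl : 0 < l) (hDy : 0 < Dy) (hε : 0 < ε)
    (hc : 0 < c) (hlc : l * c < 1)
    -- initialization
    (hx0 : xs 0 = (3 * Dy + 2) / (l * Dy) * ε)
    (hy0 : ys 0 = Dy)
    (hx0le : xs 0 ≤ 1)
    -- Perturbed GDA on f̃(x,y) = h(x)·y − (r_y/2) y²
    (hxrec : ∀ t, xs (t + 1) = xs t - c * (hOS' l Dy (xs t) * ys t))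
    (hyrec : ∀ t, ys (t + 1) = projI Dy (ys t + α * (hOS l Dy (xs (t + 1)) - ry * ys t))) :
    ∀ T : ℕ, IsOS1 l Dy ε (xs T) →
      (1 - l * c * Dy / (Dy + 1)) ^ T ≤ 1 / 2 := by
  intro T hOS
  have hx0pos : 0 < xs 0 := by rw [hx0]; positivity
  have hy : ∀ t, ys t ∈ Set.Icc 0 Dy := by
    rintro (_ | t)
    · rw [hy0]; exact ⟨hDy.le, le_rfl⟩
    · rw [hyrec t]; exact projI_mem_Icc hDy.le _
  obtain ⟨hlow, hup⟩ := gda_iterate_bounds hl hDy.le hc hlc ⟨hx0pos, hx0le⟩ hy hxrec T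
  have hxT_pos : 0 < xs T :=
    lt_of_lt_of_le (mul_pos hx0pos (pow_pos (gda_contraction_pos hl hDy.le hc hlc) T)) hlow
  have hhalf := hOS.le_of_mem_Ioc hl hDy ⟨hxT_pos, hup⟩
  rw [← hx0] at hhalf
  nlinarith

/-- Tightness of Perturbed GDA for optimization stationarity on the hard OS
instance. -/
theorem perturbed_gda_os_tightness
    (l Dy ry ε α c : ℝ) (xs ys : ℕ → ℝ)
    (hl : 0 < l) (hDy : 0 < Dy) (hry : 0 < ry) (hε : 0 < ε) (hε1 : ε < 1)
    (hα : 0 < α) (hc : 0 < c) (hlc : l * c < 1)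
    -- initialization
    (hx0 : xs 0 = (3 * Dy + 2) / (l * Dy) * ε)
    (hy0 : ys 0 = Dy)
    (hx0le : xs 0 ≤ 1)
    -- Perturbed GDA on f̃(x,y) = h(x)·y − (r_y/2) y²
    (hxrec : ∀ t, xs (t + 1) = xs t - c * (hOS' l Dy (xs t) * ys t))
    (hyrec : ∀ t, ys (t + 1) = projI Dy (ys t + α * (hOS l Dy (xs (t + 1)) - ry * ys t))) :
    ∀ T : ℕ, IsOS1 l Dy ε (xs T) →
      (1 - l * c * Dy / (Dy + 1)) ^ T ≤ 1 / 2 :=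
  perturbed_gda_os_tightness_general l Dy ry ε α c xs ys hl hDy hε hc hlc hx0 hy0 hx0le hxrec hyrec
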